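/- Let φ : ℝ → ℝⁿ be a continuously differentiable solution of the piecewise-linear ODE ẋ = A_L x + bμ for x₁ ≤ 0, ẋ = A_R x + bμ for x₁ ≥ 0, where A_L and A_R agree except possibly in their first columns. Let qᵀ = e₁ᵀ adj(A_L) and s = qᵀ b μ. If det(A_L) < 0, det(A_R) > 0, and s > 0, then d/dt (qᵀ φ(t)) ≥ s for all t, and hence ‖φ(t)‖ → ∞ as t → ±∞. -/

import Mathlib

open Matrix Filter

/-
Since `A_L` and `A_R` share every column but the first, the first rows `q` of their adjugates
agree, and `qᵀ A x = det A · x₁` for both. On each half-space this term is `≥ 0` for the matrix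
used there, so `qᵀ F(x) ≥ qᵀ b μ = s > 0` everywhere. Hence `qᵀ φ(t) - s t` is monotone, so
`qᵀ φ(t) → ±∞` as `t → ±∞`, and `|qᵀ v| ≤ C ‖v‖` forces `‖φ(t)‖ → ∞`.
-/

lemma adjugate_row_eq_of_transpose_eq {R : Type*} [CommRing R] {n : ℕ}
    {A B : Matrix (Fin (n+1)) (Fin (n+1)) R} (i : Fin (n+1)) (h : ∀ j ≠ i, Aᵀ j = Bᵀ j) :
    adjugate A i = adjugate B i := by
  funext j
  rw [adjugate_fin_succ_eq_det_submatrix, adjugate_fin_succ_eq_det_submatrix]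
  congr 2
  ext k c
  exact congrFun (h _ (Fin.succAbove_ne i c)) _

lemma adjugate_row_dotProduct_mulVec {R ι : Type*} [CommRing R] [Fintype ι] [DecidableEq ι]
    (A : Matrix ι ι R) (i : ι) (x : ι → R) :
    adjugate A i ⬝ᵥ A *ᵥ x = A.det * x i := by
  have h := congrFun (congrArg (· *ᵥ x) (adjugate_mul A)) i
  rwa [← mulVec_mulVec, smul_mulVec, one_mulVec, Pi.smul_apply, smul_eq_mul] at h

lemma le_adjugate_dotProduct_ite {n : ℕ} {AL AR : Matrix (Fin (n+1)) (Fin (n+1)) ℝ}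
    (hcols : ∀ j ≠ 0, ALᵀ j = ARᵀ j) (hdetL : AL.det < 0) (hdetR : 0 < AR.det)
    (b : Fin (n+1) → ℝ) (μ : ℝ) (x : Fin (n+1) → ℝ) :
    (adjugate AL 0 ⬝ᵥ b) * μ ≤
      adjugate AL 0 ⬝ᵥ (if x 0 ≤ 0 then AL *ᵥ x + μ • b else AR *ᵥ x + μ • b) := by
  split_ifs with hx
  · rw [dotProduct_add, adjugate_row_dotProduct_mulVec, dotProduct_smul, smul_eq_mul]
    nlinarith
  · rw [adjugate_row_eq_of_transpose_eq 0 hcols, dotProduct_add, adjugate_row_dotProduct_mulVec,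
      dotProduct_smul, smul_eq_mul]
    nlinarith

lemma tendsto_atTop_and_atBot_of_le_deriv {g g' : ℝ → ℝ} {s : ℝ}
    (hg : ∀ t, HasDerivAt g (g' t) t) (hs : 0 < s) (hg' : ∀ t, s ≤ g' t) :
    Tendsto g atTop atTop ∧ Tendsto g atBot atBot := by
  have hmono : Monotone (fun t => g t - s * t) :=
    monotone_of_hasDerivAt_nonneg (fun t => (hg t).sub ((hasDerivAt_id t).const_mul s))
      fun t => by simpa using hg' t
  have hlin : Tendsto (fun t => g 0 + s * t) atTop atTop :=
    tendsto_atTop_add_const_left _ _ (tendsto_id.const_mul_atTop hs)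
  have hlin' : Tendsto (fun t => g 0 + s * t) atBot atBot :=
    tendsto_atBot_add_const_left _ _ (tendsto_id.const_mul_atBot hs)
  constructor
  · refine tendsto_atTop_mono' _ ?_ hlin
    filter_upwards [eventually_ge_atTop 0] with t ht
    linarith [hmono ht]
  · refine tendsto_atBot_mono' _ ?_ hlin'
    filter_upwards [eventually_le_atBot 0] with t ht
    linarith [hmono ht]

lemma tendsto_norm_atTop_of_tendsto_abs_apply {α E : Type*} [SeminormedAddCommGroup E]
    [NormedSpace ℝ E] (L : E →L[ℝ] ℝ) {φ : α → E} {l : Filter α}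
    (h : Tendsto (fun t => |L (φ t)|) l atTop) : Tendsto (fun t => ‖φ t‖) l atTop := by
  refine Tendsto.atTop_of_const_mul₀ (c := ‖L‖ + 1) (by positivity)
    (tendsto_atTop_mono (fun t => ?_) h)
  calc |L (φ t)| = ‖L (φ t)‖ := (Real.norm_eq_abs _).symm
    _ ≤ ‖L‖ * ‖φ t‖ := L.le_opNorm _
    _ ≤ (‖L‖ + 1) * ‖φ t‖ := by gcongr; linarith

/-- For a solution `φ` of the piecewise-linear continuous ODE with both determinant
conditions and `s = qᵀ b μ > 0`, the quantity `qᵀ φ(t)` has derivative at least `s`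
at every time, and `‖φ(t)‖ → ∞` as `t → ±∞`. -/
theorem pwl_ode_monotone_diverge (n : ℕ) (AL AR : Matrix (Fin (n+1)) (Fin (n+1)) ℝ)
    (hcols : ∀ j : Fin (n+1), j ≠ 0 → (fun i => AL i j) = (fun i => AR i j))
    (b : Fin (n+1) → ℝ) (μ : ℝ)
    (F : (Fin (n+1) → ℝ) → (Fin (n+1) → ℝ))
    (hF : ∀ x, F x = if x 0 ≤ 0 then AL.mulVec x + μ • b else AR.mulVec x + μ • b)
    (q : Fin (n+1) → ℝ) (hq : q = (adjugate AL) 0)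
    (s : ℝ) (hs : s = (q ⬝ᵥ b) * μ)
    (hdetL : AL.det < 0) (hdetR : 0 < AR.det) (hspos : 0 < s)
    (φ : ℝ → (Fin (n+1) → ℝ)) (hφ : ∀ t, HasDerivAt φ (F (φ t)) t) :
    (∀ t, HasDerivAt (fun t => q ⬝ᵥ φ t) (q ⬝ᵥ F (φ t)) t ∧ s ≤ q ⬝ᵥ F (φ t)) ∧
    Filter.Tendsto (fun t => ‖φ t‖) Filter.atTop Filter.atTop ∧
    Filter.Tendsto (fun t => ‖φ t‖) Filter.atBot Filter.atTop := by
  let L : (Fin (n+1) → ℝ) →L[ℝ] ℝ := LinearMap.toContinuousLinearMap (dotProductBilin ℝ ℝ q)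
  have hderiv (t : ℝ) : HasDerivAt (fun t => q ⬝ᵥ φ t) (q ⬝ᵥ F (φ t)) t :=
    L.hasFDerivAt.comp_hasDerivAt t (hφ t)
  have hlower (t : ℝ) : s ≤ q ⬝ᵥ F (φ t) := by
    rw [hs, hq, hF]
    exact le_adjugate_dotProduct_ite hcols hdetL hdetR b μ (φ t)
  obtain ⟨htop, hbot⟩ := tendsto_atTop_and_atBot_of_le_deriv hderiv hspos hlower
  exact ⟨fun t => ⟨hderiv t, hlower t⟩,
    tendsto_norm_atTop_of_tendsto_abs_apply L (tendsto_abs_atTop_atTop.comp htop),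
    tendsto_norm_atTop_of_tendsto_abs_apply L (tendsto_abs_atBot_atTop.comp hbot)⟩
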